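/- arXiv:2008.02735 — 6 statements merged into one kernel-verified Lean document; each statement's English description precedes it below -/
import Mathlib

section
/- Ccbs satisfies Abstraction: for any two argumentation frameworks AF and AF' related by an isomorphism γ (a bijection on arguments preserving the attack relation in both directions), for all arguments x, y of AF, x is strictly more acceptable than y under Ccbs in AF if and only if γ(x) is strictly more acceptable than γ(y) under Ccbs in AF'. -/
/-- A possible world: a truth assignment over the atoms/arguments. -/
abbrev World (A : Type) := A → Bool

/-- A conditional (φ|ψ): first component is the antecedent ψ, second the consequent φ,
both given semantically as Boolean functions on worlds. -/
abbrev Cond (A : Type) := (World A → Bool) × (World A → Bool)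

/-- `w` falsifies (φ|ψ) iff w ⊨ ψ ∧ ¬φ. -/
def falsifies {A : Type} (w : World A) (c : Cond A) : Prop :=
  c.1 w = true ∧ c.2 w = false

/-- `w` verifies (φ|ψ) iff w ⊨ ψ ∧ φ. -/
def verifies {A : Type} (w : World A) (c : Cond A) : Prop :=
  c.1 w = true ∧ c.2 w = true

instance {A : Type} (w : World A) (c : Cond A) : Decidable (falsifies w c) := by
  unfold falsifies; infer_instance

instance {A : Type} (w : World A) (c : Cond A) : Decidable (verifies w c) := by
  unfold verifies; infer_instance

/-- Δ tolerates δ iff some world verifies δ and falsifies no member of Δ. -/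
def tolerates {A : Type} [Fintype A] [DecidableEq A]
    (Δ : Finset (Cond A)) (c : Cond A) : Prop :=
  ∃ w : World A, verifies w c ∧ ∀ d ∈ Δ, ¬ falsifies w d

instance {A : Type} [Fintype A] [DecidableEq A] (Δ : Finset (Cond A)) (c : Cond A) :
    Decidable (tolerates Δ c) := by
  unfold tolerates
  have : DecidablePred (fun w : World A => verifies w c ∧ ∀ d ∈ Δ, ¬ falsifies w d) :=
    fun _ => inferInstance
  infer_instance

/-- The Z-level of a conditional: Z(δ) = i iff δ ∈ Δ_i in the Z-partition,
where Δ_0 is the set of conditionals tolerated by Δ and the recursion continues on Δ \ Δ_0. -/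
def zlevel {A : Type} [Fintype A] [DecidableEq A]
    (Δ : Finset (Cond A)) (c : Cond A) : ℕ :=
  if tolerates Δ c then 0
  else
    if h : (Δ.filter (fun d => ¬ tolerates Δ d)).card < Δ.card then
      1 + zlevel (Δ.filter (fun d => ¬ tolerates Δ d)) c
    else 0
termination_by Δ.card
decreasing_by exact h

/-- The System Z ranking function: κ^Z(w) = max{Z(δ) : δ ∈ Δ falsified by w} + 1,
with max ∅ = -1 (so κ^Z(w) = 0 iff w falsifies no conditional of Δ). -/
def kappaZ {A : Type} [Fintype A] [DecidableEq A]
    (Δ : Finset (Cond A)) (w : World A) : ℕ :=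
  (Δ.filter (fun d => falsifies w d)).sup (fun d => zlevel Δ d + 1)

/-- The translation θ of an argumentation framework with attack relation `att`
into conditionals: for each argument a, the conditional (a | ⋀_{(b,a)∈R} ¬b). -/
def theta {A : Type} [Fintype A] [DecidableEq A] (att : A → A → Bool) : Finset (Cond A) :=
  Finset.univ.image (fun a : A =>
    ((fun w : World A => decide (∀ b, att b a = true → w b = false)),
     (fun w : World A => w a)))

/-- Ccs(a): the number of System-Z-rank-0 worlds satisfying a. -/
def Ccs {A : Type} [Fintype A] [DecidableEq A]
    (Δ : Finset (Cond A)) (a : A) : ℕ :=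
  (Finset.univ.filter (fun w : World A => kappaZ Δ w = 0 ∧ w a = true)).card

lemma kappaZ_eq_zero_iff {A : Type} [Fintype A] [DecidableEq A]
    (Δ : Finset (Cond A)) (w : World A) :
    kappaZ Δ w = 0 ↔ ∀ d ∈ Δ, ¬ falsifies w d := by
  unfold kappaZ
  rw [show (0 : ℕ) = ⊥ from rfl, Finset.sup_eq_bot_iff]
  constructor
  · intro h d hd hf
    exact Nat.succ_ne_zero _ (h d (Finset.mem_filter.mpr ⟨hd, hf⟩))
  · intro h d hd
    rcases Finset.mem_filter.mp hd with ⟨hd, hf⟩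
    exact absurd hf (h d hd)

lemma ccs_iso {A A' : Type} [Fintype A] [DecidableEq A] [Fintype A'] [DecidableEq A']
    (att : A → A → Bool) (att' : A' → A' → Bool) (γ : A ≃ A')
    (hiso : ∀ x y : A, att x y = att' (γ x) (γ y)) (a : A) :
    Ccs (theta att) a = Ccs (theta att') (γ a) := by
  unfold Ccs
  apply Finset.card_bij' (fun w _ => (fun a' => w (γ.symm a')))
    (fun w' _ => (fun b => w' (γ b)))
  · intro w hw
    simp only [Finset.mem_filter, Finset.mem_univ, true_and] at hw ⊢
    obtain ⟨hk, ha⟩ := hw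
    rw [kappaZ_eq_zero_iff] at hk ⊢
    constructor
    · intro d hd
      simp only [theta, Finset.mem_image, Finset.mem_univ, true_and] at hd
      obtain ⟨b', rfl⟩ := hd
      have := hk _ (by
        simp only [theta, Finset.mem_image, Finset.mem_univ, true_and]
        exact ⟨γ.symm b', rfl⟩)
      intro hf
      apply this
      unfold falsifies at hf ⊢
      simp only at hf ⊢
      constructor
      · rw [decide_eq_true_iff] at hf ⊢
        intro b hb
        have := hf.1 (γ b) (by rw [← Equiv.apply_symm_apply γ b', ← hiso]; exact hb)
        simpa using this
      · simpa using hf.2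
    · simpa using ha
  · intro w' hw'
    simp only [Finset.mem_filter, Finset.mem_univ, true_and] at hw' ⊢
    obtain ⟨hk, ha⟩ := hw'
    rw [kappaZ_eq_zero_iff] at hk ⊢
    constructor
    · intro d hd
      simp only [theta, Finset.mem_image, Finset.mem_univ, true_and] at hd
      obtain ⟨b, rfl⟩ := hd
      have := hk _ (by
        simp only [theta, Finset.mem_image, Finset.mem_univ, true_and]
        exact ⟨γ b, rfl⟩)
      intro hf
      apply this
      unfold falsifies at hf ⊢
      simp only at hf ⊢
      constructor
      · rw [decide_eq_true_iff] at hf ⊢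
        intro b' hb'
        have := hf.1 (γ.symm b') (by rw [hiso]; simpa using hb')
        simpa using this
      · exact hf.2
    · exact ha
  · intro w _; funext b; simp
  · intro w' _; funext b'; simp

/-- Ccbs satisfies Abstraction. -/
theorem ccbs_abstraction {A A' : Type} [Fintype A] [DecidableEq A] [Fintype A'] [DecidableEq A']
    (att : A → A → Bool) (att' : A' → A' → Bool) (γ : A ≃ A')
    (hiso : ∀ x y : A, att x y = att' (γ x) (γ y)) :
    ∀ x y : A, Ccs (theta att) x > Ccs (theta att) y ↔
      Ccs (theta att') (γ x) > Ccs (theta att') (γ y) := by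
  intro x y
  rw [ccs_iso att att' γ hiso x, ccs_iso att att' γ hiso y]
end

section
/- Ccbs does not satisfy Void Precedence: in the argumentation framework with arguments {a, b} and the single attack (a, a), the unattacked argument b is not strictly more acceptable than the attacked argument a under Ccbs; in fact Ccs(a) = Ccs(b) = 1, so a and b are equally acceptable. -/
/-- The AF with arguments {a,b} (a = 0, b = 1) and single attack (a,a). -/
def attVP : Fin 2 → Fin 2 → Bool := fun x y => decide (x = 0 ∧ y = 0)

instance {A : Type} [Fintype A] [DecidableEq A] (Δ : Finset (Cond A)) (a : A) :
    DecidablePred fun w : World A => (∀ d ∈ Δ, ¬ falsifies w d) ∧ w a = true :=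
  fun _ => instDecidableAnd

lemma Ccs_eq {A : Type} [Fintype A] [DecidableEq A] (Δ : Finset (Cond A)) (a : A) :
    Ccs Δ a = (Finset.univ.filter
      (fun w : World A => (∀ d ∈ Δ, ¬ falsifies w d) ∧ w a = true)).card := by
  unfold Ccs
  congr 1
  apply Finset.filter_congr
  intro w _
  simp [kappaZ_eq_zero_iff]

/-- Ccbs does not satisfy Void Precedence: Ccs(a) = Ccs(b) = 1 and the
unattacked b is not strictly more acceptable than a. -/
theorem ccbs_not_void_precedence :
    Ccs (theta attVP) 0 = 1 ∧ Ccs (theta attVP) 1 = 1 ∧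
      ¬ (Ccs (theta attVP) 1 > Ccs (theta attVP) 0) := by
  rw [Ccs_eq, Ccs_eq]
  set_option maxRecDepth 10000 in decide
end

section
/- For any argumentation framework AF, if an argument a is unattacked (no (c,a) ∈ R), then every world w with System-Z rank 0 for the knowledge base θ(AF) satisfies a; consequently Ccs(a) = |(κ^Z)^{-1}(0)|, the maximal possible value. -/
/-- every rank-0 world satisfies an unattacked argument, so its Ccs score
is the number of all rank-0 worlds, the maximal possible value. -/
theorem unattacked_argument_maximal {A : Type} [Fintype A] [DecidableEq A]
    (att : A → A → Bool) (a : A) (h : ∀ c : A, att c a = false) :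
    (∀ w : World A, kappaZ (theta att) w = 0 → w a = true) ∧
    Ccs (theta att) a =
      (Finset.univ.filter (fun w : World A => kappaZ (theta att) w = 0)).card := by

  have key : ∀ w : World A, kappaZ (theta att) w = 0 → w a = true := by
    intro w hw
    by_contra hwa
    have hwa' : w a = false := by
      cases hval : w a with
      | false => rfl
      | true => exact absurd hval hwa
    have hmem : ((fun w : World A => decide (∀ b, att b a = true → w b = false)),
        (fun w : World A => w a)) ∈ theta att := by
      exact Finset.mem_image.mpr ⟨a, Finset.mem_univ a, rfl⟩
    have hfals : falsifies w ((fun w : World A => decide (∀ b, att b a = true → w b = false)),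
        (fun w : World A => w a)) := by
      constructor
      · simp only [decide_eq_true_eq]
        intro b hb
        exact absurd hb (by simp [h b])
      · exact hwa'
    have : ((theta att).filter (fun d => falsifies w d)).sup
        (fun d => zlevel (theta att) d + 1) = 0 := hw
    have hin : ((fun w : World A => decide (∀ b, att b a = true → w b = false)),
        (fun w : World A => w a)) ∈ (theta att).filter (fun d => falsifies w d) :=
      Finset.mem_filter.mpr ⟨hmem, hfals⟩
    exact Nat.succ_ne_zero _ ((Finset.sup_eq_bot_iff _ _).mp this _ hin)
  refine ⟨key, ?_⟩
  unfold Ccs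
  congr 1
  apply Finset.filter_congr
  intro w _
  constructor
  · exact fun ⟨h1, _⟩ => h1
  · exact fun h1 => ⟨h1, key w h1⟩
end

section
/- Ccbs satisfies Independence restricted to adding isolated arguments: if AF' is obtained from AF = (A,R) by adding a new argument c with no attacks involving c, then for all a, b ∈ A, a ⪰ b under Ccbs in AF if and only if a ⪰ b under Ccbs in AF'. -/
lemma kappaZ_theta_eq_zero_iff {A : Type} [Fintype A] [DecidableEq A]
    (att : A → A → Bool) (w : World A) :
    kappaZ (theta att) w = 0 ↔ ∀ x, (∀ b, att b x = true → w b = false) → w x = true := by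
  simp [kappaZ_eq_zero_iff, theta, falsifies]

lemma kappaZ_theta_option_eq_zero_iff {A : Type} [Fintype A] [DecidableEq A]
    {att : A → A → Bool} {att' : Option A → Option A → Bool}
    (h1 : ∀ x y : A, att' (some x) (some y) = att x y)
    (h2 : ∀ x : Option A, att' x none = false)
    (h3 : ∀ y : Option A, att' none y = false) (w : World (Option A)) :
    kappaZ (theta att') w = 0 ↔ w none = true ∧ kappaZ (theta att) (w ∘ some) = 0 := by
  simp [kappaZ_theta_eq_zero_iff, Option.forall, h1, h2, h3]

lemma Ccs_theta_some {A : Type} [Fintype A] [DecidableEq A]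
    {att : A → A → Bool} {att' : Option A → Option A → Bool}
    (h1 : ∀ x y : A, att' (some x) (some y) = att x y)
    (h2 : ∀ x : Option A, att' x none = false)
    (h3 : ∀ y : Option A, att' none y = false) (a : A) :
    Ccs (theta att') (some a) = Ccs (theta att) a := by
  unfold Ccs
  simp_rw [kappaZ_theta_option_eq_zero_iff h1 h2 h3]
  refine Finset.card_nbij' (· ∘ some) (fun v o => o.elim true v) ?_ ?_ ?_ ?_
  · intro w hw
    simp_all
  · intro v hv
    simp_all [Function.comp_def]
  · intro w hw
    funext o
    cases o <;> simp_all
  · intro v _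
    rfl

/-- Ccbs is unaffected by adding an isolated argument (`none`). -/
theorem ccbs_independence_isolated {A : Type} [Fintype A] [DecidableEq A]
    (att : A → A → Bool) (att' : Option A → Option A → Bool)
    (h1 : ∀ x y : A, att' (some x) (some y) = att x y)
    (h2 : ∀ x : Option A, att' x none = false)
    (h3 : ∀ y : Option A, att' none y = false) :
    ∀ a b : A, (Ccs (theta att) a ≥ Ccs (theta att) b ↔
      Ccs (theta att') (some a) ≥ Ccs (theta att') (some b)) := by
  intro a b
  rw [Ccs_theta_some h1 h2 h3 a, Ccs_theta_some h1 h2 h3 b]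
end

section
/- For any finite set Δ of conditionals whose Z-partition exists (every nonempty subset encountered has a tolerated element), the System Z ranking function κ^Z accepts every conditional in Δ: for each (φ|ψ) ∈ Δ, κ^Z(ψ ∧ φ) < κ^Z(ψ ∧ ¬φ), where κ^Z of a formula is the minimum κ^Z-rank of its models. -/
lemma zlevel_key {A : Type} [Fintype A] [DecidableEq A] :
    ∀ n (Δ : Finset (Cond A)), Δ.card ≤ n →
    (∀ Δ' ⊆ Δ, Δ'.Nonempty → ∃ c ∈ Δ', tolerates Δ' c) →
    ∀ c ∈ Δ, ∃ w : World A, verifies w c ∧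
      ∀ d ∈ Δ, zlevel Δ c ≤ zlevel Δ d → ¬ falsifies w d := by
  intro n
  induction n with
  | zero =>
    intro Δ hcard _ c hc
    simp [Finset.card_eq_zero.mp (Nat.le_zero.mp hcard)] at hc
  | succ n ih =>
    intro Δ hcard hpart c hc
    by_cases htol : tolerates Δ c
    · obtain ⟨w, hv, hw⟩ := htol
      exact ⟨w, hv, fun d hd _ => hw d hd⟩
    · set Δ' := Δ.filter (fun d => ¬ tolerates Δ d) with hΔ'
      have hsub : Δ' ⊆ Δ := Finset.filter_subset _ _
      have hlt : Δ'.card < Δ.card := by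
        obtain ⟨c0, hc0, htol0⟩ := hpart Δ (le_refl _) ⟨c, hc⟩
        apply Finset.card_lt_card
        refine ⟨hsub, fun hss => ?_⟩
        have := hss hc0
        rw [hΔ', Finset.mem_filter] at this
        exact this.2 htol0
      have hc' : c ∈ Δ' := Finset.mem_filter.mpr ⟨hc, htol⟩
      have hpart' : ∀ Δ'' ⊆ Δ', Δ''.Nonempty → ∃ c ∈ Δ'', tolerates Δ'' c :=
        fun Δ'' hsub'' => hpart Δ'' (hsub''.trans hsub)
      obtain ⟨w, hv, hw⟩ := ih Δ' (by omega) hpart' c hc'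
      have hzeq : ∀ d ∈ Δ', zlevel Δ d = 1 + zlevel Δ' d := by
        intro d hd
        rw [Finset.mem_filter] at hd
        rw [zlevel, if_neg hd.2, dif_pos hlt]
      refine ⟨w, hv, fun d hd hle hf => ?_⟩
      by_cases htd : tolerates Δ d
      · have h0 : zlevel Δ d = 0 := by rw [zlevel, if_pos htd]
        rw [h0, Nat.le_zero, hzeq c hc'] at hle
        omega
      · have hd' : d ∈ Δ' := Finset.mem_filter.mpr ⟨hd, htd⟩
        rw [hzeq c hc', hzeq d hd'] at hle
        exact hw d hd' (by omega) hf

/-- soundness of System Z: if the Z-partition of Δ exists (every nonempty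
subset has a tolerated element), then κ^Z accepts every conditional of Δ, i.e.
κ^Z(ψ ∧ φ) < κ^Z(ψ ∧ ¬φ), where κ^Z of a formula is the minimum rank of its models
(⊤ if there is no model). -/
theorem systemZ_accepts_all {A : Type} [Fintype A] [DecidableEq A]
    (Δ : Finset (Cond A))
    (hpart : ∀ Δ' ⊆ Δ, Δ'.Nonempty → ∃ c ∈ Δ', tolerates Δ' c) :
    ∀ c ∈ Δ,
      (⨅ w : {w : World A // verifies w c}, (kappaZ Δ w.1 : ℕ∞)) <
      (⨅ w : {w : World A // falsifies w c}, (kappaZ Δ w.1 : ℕ∞)) := by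
  intro c hc
  obtain ⟨w, hv, hw⟩ := zlevel_key Δ.card Δ (le_refl _) hpart c hc
  set i := zlevel Δ c with hi
  have hleft : (⨅ w : {w : World A // verifies w c}, (kappaZ Δ w.1 : ℕ∞)) ≤ (i : ℕ∞) := by
    refine le_trans (iInf_le _ ⟨w, hv⟩) ?_
    have : kappaZ Δ w ≤ i := by
      apply Finset.sup_le
      intro d hd
      rw [Finset.mem_filter] at hd
      have := hw d hd.1
      have hlt : zlevel Δ d < i := by
        by_contra hge
        exact this (by omega) hd.2
      omega
    exact_mod_cast this
  have hright : ((i : ℕ∞) + 1) ≤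
      (⨅ w : {w : World A // falsifies w c}, (kappaZ Δ w.1 : ℕ∞)) := by
    refine le_iInf fun ⟨w', hf⟩ => ?_
    have : i + 1 ≤ kappaZ Δ w' :=
      Finset.le_sup (f := fun d => zlevel Δ d + 1)
        (Finset.mem_filter.mpr ⟨hc, hf⟩)
    exact_mod_cast this
  calc (⨅ w : {w : World A // verifies w c}, (kappaZ Δ w.1 : ℕ∞))
      ≤ (i : ℕ∞) := hleft
    _ < (i : ℕ∞) + 1 := by
        exact_mod_cast lt_add_one i
    _ ≤ _ := hright
end

section
/- If two arguments a and b in an argumentation framework AF have the same set of attackers, then their conditionals in θ(AF) have the same antecedent, and swapping a and b induces a symmetry showing Ccs(a) = Ccs(b) whenever additionally a and b attack the same arguments and do not attack each other or themselves; hence a ≃ b under Ccbs. -/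
/-!
The transposition of `a` and `b` is an automorphism of the attack relation, so relabelling
worlds along it permutes the conditionals of θ(AF). System Z is built from tolerance alone, and
tolerance is preserved by any bijection of worlds that permutes the knowledge base; hence so are
the Z-levels and κ^Z. The relabelling therefore maps the κ^Z-rank-0 worlds satisfying `b`
bijectively onto those satisfying `a`.
-/

namespace Cond

variable {A : Type}

def comap (e : World A ≃ World A) (c : Cond A) : Cond A :=
  (c.1 ∘ e, c.2 ∘ e)

@[simp]
lemma comap_comap_symm (e : World A ≃ World A) (c : Cond A) : (c.comap e.symm).comap e = c := by
  simp [comap, Function.comp_def]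

@[simp]
lemma comap_symm_comap (e : World A ≃ World A) (c : Cond A) : (c.comap e).comap e.symm = c := by
  simpa using comap_comap_symm e.symm c

end Cond

section SystemZ

variable {A : Type} {e : World A ≃ World A} {Δ : Finset (Cond A)}

lemma falsifies_comap {w : World A} {c : Cond A} : falsifies w (c.comap e) ↔ falsifies (e w) c :=
  Iff.rfl

def IsComapInvariant (e : World A ≃ World A) (Δ : Finset (Cond A)) : Prop :=
  ∀ c, c.comap e ∈ Δ ↔ c ∈ Δ

lemma IsComapInvariant.symm (h : IsComapInvariant e Δ) : IsComapInvariant e.symm Δ := fun c => by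
  rw [← h, Cond.comap_comap_symm]

lemma isComapInvariant_image {ι : Type} [Fintype ι] [DecidableEq (Cond A)] {f : ι → Cond A}
    (g : ι ≃ ι) (hf : ∀ i, (f i).comap e = f (g i)) :
    IsComapInvariant e (Finset.univ.image f) := by
  have hf_symm : ∀ i, (f i).comap e.symm = f (g.symm i) := fun i => by
    rw [← Cond.comap_symm_comap e (f (g.symm i)), hf, Equiv.apply_symm_apply]
  intro c
  simp only [Finset.mem_image, Finset.mem_univ, true_and]
  constructor
  · rintro ⟨i, hi⟩
    exact ⟨g.symm i, by rw [← hf_symm, hi, Cond.comap_symm_comap]⟩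
  · rintro ⟨i, rfl⟩
    exact ⟨g i, (hf i).symm⟩

variable [Fintype A] [DecidableEq A]

lemma IsComapInvariant.tolerates_of_tolerates_comap (h : IsComapInvariant e Δ) {c : Cond A}
    (hc : tolerates Δ (c.comap e)) : tolerates Δ c := by
  obtain ⟨w, hw, hΔ⟩ := hc
  exact ⟨e w, hw, fun d hd => hΔ (d.comap e) ((h d).mpr hd)⟩

lemma IsComapInvariant.tolerates_comap_iff (h : IsComapInvariant e Δ) (c : Cond A) :
    tolerates Δ (c.comap e) ↔ tolerates Δ c :=
  ⟨h.tolerates_of_tolerates_comap,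
    fun hc => h.symm.tolerates_of_tolerates_comap (by rwa [Cond.comap_symm_comap])⟩

lemma IsComapInvariant.filter_not_tolerates (h : IsComapInvariant e Δ) :
    IsComapInvariant e (Δ.filter fun d => ¬ tolerates Δ d) := fun c => by
  simp only [Finset.mem_filter, h c, h.tolerates_comap_iff]

lemma IsComapInvariant.zlevel_comap (h : IsComapInvariant e Δ) (c : Cond A) :
    zlevel Δ (c.comap e) = zlevel Δ c := by
  induction Δ using zlevel.induct c with
  | case1 Δ hc =>
    rw [zlevel.eq_1 Δ, zlevel.eq_1 Δ c, if_pos hc, if_pos ((h.tolerates_comap_iff c).mpr hc)]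
  | case2 Δ hc hcard ih =>
    rw [zlevel.eq_1 Δ, zlevel.eq_1 Δ c, if_neg hc, if_neg (mt (h.tolerates_comap_iff c).mp hc),
      dif_pos hcard, dif_pos hcard, ih h.filter_not_tolerates]
  | case3 Δ hc hcard =>
    rw [zlevel.eq_1 Δ, zlevel.eq_1 Δ c, if_neg hc, if_neg (mt (h.tolerates_comap_iff c).mp hc),
      dif_neg hcard, dif_neg hcard]

lemma IsComapInvariant.kappaZ_le_kappaZ_apply (h : IsComapInvariant e Δ) (w : World A) :
    kappaZ Δ w ≤ kappaZ Δ (e w) := by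
  refine Finset.sup_le fun d hd => ?_
  obtain ⟨hdΔ, hwd⟩ := Finset.mem_filter.mp hd
  have hd' : d.comap e.symm ∈ Δ.filter fun d => falsifies (e w) d :=
    Finset.mem_filter.mpr ⟨(h.symm d).mpr hdΔ, by rwa [falsifies_comap, Equiv.symm_apply_apply]⟩
  calc zlevel Δ d + 1 = zlevel Δ (d.comap e.symm) + 1 := by rw [h.symm.zlevel_comap]
    _ ≤ kappaZ Δ (e w) := Finset.le_sup (f := fun d => zlevel Δ d + 1) hd'

lemma IsComapInvariant.kappaZ_apply (h : IsComapInvariant e Δ) (w : World A) :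
    kappaZ Δ (e w) = kappaZ Δ w :=
  le_antisymm (by simpa using h.symm.kappaZ_le_kappaZ_apply (e w)) (h.kappaZ_le_kappaZ_apply w)

lemma IsComapInvariant.Ccs_eq (h : IsComapInvariant e Δ) {a b : A}
    (hab : ∀ w, e w a = w b) : Ccs Δ a = Ccs Δ b := by
  refine (Finset.card_equiv e fun w => ?_).symm
  simp only [Finset.mem_filter, Finset.mem_univ, true_and, h.kappaZ_apply, hab]

end SystemZ

section Argumentation

variable {A : Type} [Fintype A] [DecidableEq A]

/-- `worldPerm σ w = w ∘ σ⁻¹`. -/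
abbrev worldPerm (σ : Equiv.Perm A) : World A ≃ World A :=
  σ.arrowCongr (Equiv.refl Bool)

lemma theta_isComapInvariant (att : A → A → Bool) (σ : Equiv.Perm A)
    (hσ : ∀ x y, att (σ x) (σ y) = att x y) : IsComapInvariant (worldPerm σ) (theta att) := by
  refine isComapInvariant_image σ.symm fun x => Prod.ext (funext fun w => ?_) rfl
  simp only [Cond.comap, Function.comp_apply, Equiv.arrowCongr_apply, Equiv.coe_refl,
    id_eq, decide_eq_decide]
  refine σ.forall_congr_right.symm.trans (forall_congr' fun y => ?_)
  rw [Equiv.symm_apply_apply, ← hσ y (σ.symm x), Equiv.apply_symm_apply]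

end Argumentation

theorem swap_symmetric_arguments_equal_general {A : Type} [Fintype A] [DecidableEq A]
    (att : A → A → Bool) (a b : A)
    (hin : ∀ x : A, att x a = att x b)
    (hswap : ∀ x y : A, att x y = att (Equiv.swap a b x) (Equiv.swap a b y)) :
    ((fun w : World A => decide (∀ c, att c a = true → w c = false)) =
     (fun w : World A => decide (∀ c, att c b = true → w c = false))) ∧
    Ccs (theta att) a = Ccs (theta att) b := by
  refine ⟨funext fun w => by simp only [hin], ?_⟩
  have hΔ := theta_isComapInvariant att (Equiv.swap a b) fun x y => (hswap x y).symm
  exact hΔ.Ccs_eq fun w => by simp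

/-- if a and b have the same attackers (so their conditionals share the same
antecedent) and the transposition of a and b is an automorphism of AF, with a and b not
attacking each other or themselves, then Ccs(a) = Ccs(b), i.e. a ≃ b under Ccbs. -/
theorem swap_symmetric_arguments_equal {A : Type} [Fintype A] [DecidableEq A]
    (att : A → A → Bool) (a b : A)
    (hin : ∀ x : A, att x a = att x b)
    (hswap : ∀ x y : A, att x y = att (Equiv.swap a b x) (Equiv.swap a b y))
    (hab : att a b = false) (hba : att b a = false)
    (haa : att a a = false) (hbb : att b b = false) :
    ((fun w : World A => decide (∀ c, att c a = true → w c = false)) =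
     (fun w : World A => decide (∀ c, att c b = true → w c = false))) ∧
    Ccs (theta att) a = Ccs (theta att) b :=
  swap_symmetric_arguments_equal_general att a b hin hswap
end
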